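/- For δJ ∈ ℝ and η ∈ [0,1], define Q(η) = K_{δJ}·K_{−δJ} at φ = π/2, i.e., K_J = ∫_{−π}^{π} I₀(√(1 + η cos θ))·e^{J·sin θ} dθ/(2π). Then ∂Q/∂η ≥ 0; i.e., Q is nondecreasing in η, hence maximized at η = 1. -/

import Mathlib

open Real Set intervalIntegral

/-- Modified Bessel function of the first kind of order 0. -/
noncomputable def besselI0 (x : ℝ) : ℝ :=
  ∑' n : ℕ, (x / 2) ^ (2 * n) / ((Nat.factorial n : ℝ)) ^ 2

/-- The two-site partition function at `φ = π/2`, as a function of `η`. -/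
noncomputable def Keta (J η : ℝ) : ℝ :=
  ∫ θ in (-π)..π,
    besselI0 (Real.sqrt (1 + η * Real.cos θ)) * Real.exp (J * Real.sin θ) / (2 * π)

/-- `Q(η) = K_{δJ} · K_{−δJ}` at `φ = π/2`. -/
noncomputable def Qeta (δJ η : ℝ) : ℝ :=
  Keta δJ η * Keta (-δJ) η


noncomputable def gg (t : ℝ) : ℝ := ∑' n : ℕ, t ^ n / ((Nat.factorial n : ℝ))^2

lemma gg_summable (t : ℝ) : Summable (fun n : ℕ => t ^ n / ((Nat.factorial n : ℝ))^2) := by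
  apply Summable.of_norm_bounded (Real.summable_pow_div_factorial |t|)
  intro n
  have h1 : (1:ℝ) ≤ (Nat.factorial n : ℝ) := by exact_mod_cast Nat.one_le_iff_ne_zero.mpr n.factorial_ne_zero
  have h0 : (0:ℝ) < (Nat.factorial n : ℝ) := by linarith
  have he : ‖t ^ n / ((Nat.factorial n : ℝ))^2‖ = |t|^n / ((Nat.factorial n:ℝ))^2 := by
    rw [norm_div]; simp [abs_pow, abs_of_nonneg h0.le]
  rw [he]
  apply div_le_div_of_nonneg_left (by positivity) h0
  nlinarith

lemma gg_nonneg {t : ℝ} (ht : 0 ≤ t) : 0 ≤ gg t :=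
  tsum_nonneg fun n => by positivity

lemma besselI0_eq (x : ℝ) : besselI0 x = gg (x^2/4) := by
  unfold besselI0 gg
  congr 1; funext n
  rw [pow_mul]
  congr 1
  rw [div_pow]; norm_num

lemma besselI0_sqrt (t : ℝ) : besselI0 (Real.sqrt t) = gg (max t 0 / 4) := by
  rw [besselI0_eq]
  congr 2
  rcases le_or_gt 0 t with h | h
  · rw [Real.sq_sqrt h, max_eq_left h]
  · rw [Real.sqrt_eq_zero'.mpr h.le, max_eq_right h.le]
    norm_num

noncomputable def pp (n : ℕ) (x : ℝ) : ℝ := max x 0 ^ n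

lemma convexOn_pp (n : ℕ) : ConvexOn ℝ Set.univ (pp n) := by
  refine ⟨convex_univ, fun x _ y _ a b ha hb hab => ?_⟩
  simp only [pp, smul_eq_mul]
  have hx : (0:ℝ) ≤ max x 0 := le_max_right _ _
  have hy : (0:ℝ) ≤ max y 0 := le_max_right _ _
  have hmax : max (a * x + b * y) 0 ≤ a * max x 0 + b * max y 0 := by
    apply max_le
    · have := mul_le_mul_of_nonneg_left (le_max_left x 0) ha
      have := mul_le_mul_of_nonneg_left (le_max_left y 0) hb
      linarith
    · have := mul_nonneg ha hx
      have := mul_nonneg hb hy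
      linarith
  have h1 : max (a * x + b * y) 0 ^ n ≤ (a * max x 0 + b * max y 0) ^ n :=
    pow_le_pow_left₀ (le_max_right _ _) hmax n
  have h2 := (convexOn_pow n).2 (mem_Ici.mpr hx) (mem_Ici.mpr hy) ha hb hab
  simp only [smul_eq_mul] at h2
  exact h1.trans h2

lemma convexOn_F (n : ℕ) : ConvexOn ℝ Set.univ (fun u : ℝ => pp n (1+u) + pp n (1-u)) := by
  have hp := convexOn_pp n
  refine ⟨convex_univ, fun x _ y _ a b ha hb hab => ?_⟩
  have e1 : (1:ℝ) + (a • x + b • y) = a • (1+x) + b • (1+y) := by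
    simp only [smul_eq_mul]; nlinarith [hab]
  have e2 : (1:ℝ) - (a • x + b • y) = a • (1-x) + b • (1-y) := by
    simp only [smul_eq_mul]; nlinarith [hab]
  have h1 := hp.2 (mem_univ (1+x)) (mem_univ (1+y)) ha hb hab
  have h2 := hp.2 (mem_univ (1-x)) (mem_univ (1-y)) ha hb hab
  show pp n (1 + (a • x + b • y)) + pp n (1 - (a • x + b • y)) ≤ _
  rw [e1, e2]
  simp only [smul_eq_mul] at *
  linarith

lemma F_even (n : ℕ) (u : ℝ) : pp n (1 + -u) + pp n (1 - -u) = pp n (1+u) + pp n (1-u) := by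
  rw [add_comm]; congr 1 <;> congr 1 <;> ring

lemma F_mono (n : ℕ) {u v : ℝ} (h : |u| ≤ |v|) :
    pp n (1+u) + pp n (1-u) ≤ pp n (1+v) + pp n (1-v) := by
  have hv : -|v| ≤ u ∧ u ≤ |v| := abs_le.mp h
  have hseg : u ∈ segment ℝ (-|v|) (|v|) := by
    rw [segment_eq_Icc (neg_le_self (abs_nonneg v))]
    exact ⟨hv.1, hv.2⟩
  have hle := (convexOn_F n).le_on_segment (mem_univ (-|v|)) (mem_univ (|v|)) hseg
  have hFv : pp n (1 + -|v|) + pp n (1 - -|v|) = pp n (1+v) + pp n (1-v) := by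
    rcases abs_choice v with hc | hc
    · rw [F_even, hc]
    · rw [hc]; congr 1 <;> congr 1 <;> ring
  have hFv' : pp n (1 + |v|) + pp n (1 - |v|) = pp n (1+v) + pp n (1-v) := by
    rcases abs_choice v with hc | hc
    · rw [hc]
    · rw [hc, add_comm]; congr 1 <;> congr 1 <;> ring
  rw [hFv, hFv'] at hle
  simpa using hle


lemma gg_def (t : ℝ) : gg t = ∑' n : ℕ, t ^ n / ((Nat.factorial n : ℝ))^2 := rfl
lemma pp_def (n : ℕ) (x : ℝ) : pp n x = max x 0 ^ n := rfl

lemma S_mono (c : ℝ) {η₁ η₂ : ℝ} (h0 : 0 ≤ η₁) (h : η₁ ≤ η₂) :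
    gg (max (1+η₁*c) 0 / 4) + gg (max (1-η₁*c) 0 / 4)
      ≤ gg (max (1+η₂*c) 0 / 4) + gg (max (1-η₂*c) 0 / 4) := by
  have huv : |η₁*c| ≤ |η₂*c| := by
    rw [abs_mul, abs_mul]
    exact mul_le_mul_of_nonneg_right (by rw [abs_of_nonneg h0, abs_of_nonneg (h0.trans h)]; exact h)
      (abs_nonneg c)
  simp only [gg_def]
  rw [← Summable.tsum_add (gg_summable _) (gg_summable _), ← Summable.tsum_add (gg_summable _) (gg_summable _)]
  apply Summable.tsum_le_tsum _ ((gg_summable _).add (gg_summable _)) ((gg_summable _).add (gg_summable _))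
  intro n
  have key := F_mono n huv
  simp only [pp_def] at key
  have hD : (0:ℝ) < 4^n * ((Nat.factorial n : ℝ))^2 := by
    have : (0:ℝ) < (Nat.factorial n : ℝ) := by exact_mod_cast n.factorial_pos
    positivity
  have e : ∀ x : ℝ, (max x 0 / 4)^n / ((Nat.factorial n : ℝ))^2
      = max x 0 ^ n / (4^n * ((Nat.factorial n : ℝ))^2) := by
    intro x; rw [div_pow, div_div]
  simp only [e, ← add_div]
  exact div_le_div_of_nonneg_right (by linarith) hD.le


noncomputable def fI (J η θ : ℝ) : ℝ :=
  besselI0 (Real.sqrt (1 + η * Real.cos θ)) * Real.exp (J * Real.sin θ) / (2 * π)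

lemma Keta_eq (J η : ℝ) : Keta J η = ∫ θ in (-π)..π, fI J η θ := rfl

lemma fI_eq (J η θ : ℝ) :
    fI J η θ = gg (max (1 + η * Real.cos θ) 0 / 4) * Real.exp (J * Real.sin θ) / (2 * π) := by
  rw [fI, besselI0_sqrt]

lemma fI_cont (J η : ℝ) : Continuous (fI J η) := by
  have hfe : fI J η = fun θ =>
      (∑' n : ℕ, (max (1 + η * Real.cos θ) 0 / 4) ^ n / ((Nat.factorial n : ℝ))^2)
        * Real.exp (J * Real.sin θ) / (2 * π) := by
    funext θ; rw [fI_eq, gg_def]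
  rw [hfe]
  apply Continuous.div_const
  apply Continuous.mul _ (Real.continuous_exp.comp (continuous_const.mul Real.continuous_sin))
  set R : ℝ := (1 + |η|) / 4 with hR
  apply continuous_tsum
    (f := fun (n : ℕ) (θ : ℝ) => (max (1 + η * Real.cos θ) 0 / 4) ^ n / ((Nat.factorial n : ℝ))^2)
    (u := fun n => R ^ n / ((Nat.factorial n : ℝ))^2)
  · intro n
    apply Continuous.div_const
    apply Continuous.pow
    exact ((continuous_const.add (continuous_const.mul Real.continuous_cos)).max continuous_const).div_const 4
  · exact gg_summable R
  · intro n θ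
    have h1 : max (1 + η * Real.cos θ) 0 / 4 ≤ R := by
      have : 1 + η * Real.cos θ ≤ 1 + |η| := by
        have := abs_mul η (Real.cos θ)
        have h2 : |η * Real.cos θ| ≤ |η| := by
          rw [abs_mul]
          calc |η| * |Real.cos θ| ≤ |η| * 1 :=
            mul_le_mul_of_nonneg_left (Real.abs_cos_le_one θ) (abs_nonneg η)
          _ = |η| := mul_one _
        have := le_abs_self (η * Real.cos θ)
        linarith
      have hmax : max (1 + η * Real.cos θ) 0 ≤ 1 + |η| := max_le this (by positivity)
      rw [hR]; linarith
    have h0 : 0 ≤ max (1 + η * Real.cos θ) 0 / 4 := by positivity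
    rw [Real.norm_eq_abs, abs_of_nonneg (by positivity)]
    apply div_le_div_of_nonneg_right (pow_le_pow_left₀ h0 h1 n)
    positivity

lemma fI_periodic (J η : ℝ) : Function.Periodic (fI J η) (2*π) := by
  intro θ
  simp only [fI, Real.cos_add_two_pi, Real.sin_add_two_pi]

lemma reflect (J η : ℝ) :
    (∫ θ in (-π)..π, fI J η (π - θ)) = ∫ θ in (-π)..π, fI J η θ := by
  have h1 : (∫ θ in (-π)..π, fI J η (π - θ))
      = ∫ θ in (-π)..π, (fun x => fI J η (π + x)) (-θ) := by
    simp only [sub_eq_add_neg]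
  rw [h1, intervalIntegral.integral_comp_neg (fun x => fI J η (π + x))]
  rw [intervalIntegral.integral_comp_add_left (fI J η) π]
  have h2 : π + -π = 0 := by ring
  have h3 : π + - -π = 0 + 2*π := by ring
  rw [h2, h3]
  have h4 := (fI_periodic J η).intervalIntegral_add_eq 0 (-π)
  rw [h4]
  congr 1
  ring

lemma fI_reflect_cont (J η : ℝ) : Continuous (fun θ => fI J η (π - θ)) :=
  (fI_cont J η).comp (continuous_const.sub continuous_id)

lemma two_Keta (J η : ℝ) :
    2 * Keta J η = ∫ θ in (-π)..π, (fI J η θ + fI J η (π - θ)) := by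
  rw [intervalIntegral.integral_add ((fI_cont J η).intervalIntegrable _ _)
    ((fI_reflect_cont J η).intervalIntegrable _ _), reflect, Keta_eq]
  ring

lemma pointwise (J η θ : ℝ) :
    fI J η θ + fI J η (π - θ)
      = (gg (max (1 + η * Real.cos θ) 0 / 4) + gg (max (1 - η * Real.cos θ) 0 / 4))
        * (Real.exp (J * Real.sin θ) / (2 * π)) := by
  rw [fI_eq, fI_eq, Real.cos_pi_sub, Real.sin_pi_sub]
  have : 1 + η * -Real.cos θ = 1 - η * Real.cos θ := by ring
  rw [this]
  ring

lemma Keta_mono (J : ℝ) {η₁ η₂ : ℝ} (h0 : 0 ≤ η₁) (h : η₁ ≤ η₂) :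
    Keta J η₁ ≤ Keta J η₂ := by
  have key : (∫ θ in (-π)..π, (fI J η₁ θ + fI J η₁ (π - θ)))
      ≤ ∫ θ in (-π)..π, (fI J η₂ θ + fI J η₂ (π - θ)) := by
    apply intervalIntegral.integral_mono_on (by linarith [Real.pi_pos])
    · exact ((fI_cont J η₁).add (fI_reflect_cont J η₁)).intervalIntegrable _ _
    · exact ((fI_cont J η₂).add (fI_reflect_cont J η₂)).intervalIntegrable _ _
    · intro θ _
      rw [pointwise, pointwise]
      apply mul_le_mul_of_nonneg_right (S_mono (Real.cos θ) h0 h)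
      positivity
  rw [← two_Keta, ← two_Keta] at key
  linarith

lemma Keta_nonneg (J η : ℝ) : 0 ≤ Keta J η := by
  rw [Keta_eq]
  apply intervalIntegral.integral_nonneg (by linarith [Real.pi_pos])
  intro θ _
  rw [fI_eq]
  have h1 : 0 ≤ gg (max (1 + η * Real.cos θ) 0 / 4) := gg_nonneg (by positivity)
  have := Real.pi_pos
  positivity

lemma Keta_even (J η : ℝ) : Keta J (-η) = Keta J η := by
  rw [Keta_eq, Keta_eq, ← reflect J η]
  congr 1; funext θ
  rw [fI_eq, fI_eq, Real.cos_pi_sub, Real.sin_pi_sub]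
  congr 3
  ring


lemma Qeta_mono_Ici (δJ : ℝ) : MonotoneOn (Qeta δJ) (Set.Ici 0) := by
  intro x hx y hy hxy
  exact mul_le_mul (Keta_mono δJ hx hxy) (Keta_mono (-δJ) hx hxy)
    (Keta_nonneg _ _) (Keta_nonneg _ _)

lemma deriv_nonneg_of_monoOn {f : ℝ → ℝ} (hf : MonotoneOn f (Set.Ici 0)) {x : ℝ}
    (hx : 0 < x) : 0 ≤ deriv f x := by
  by_cases hd : DifferentiableAt ℝ f x
  · have h1 : Filter.Tendsto (slope f x) (nhdsWithin x (Set.Ioi x)) (nhds (deriv f x)) := by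
      have := hasDerivAt_iff_tendsto_slope.mp hd.hasDerivAt
      exact this.mono_left (nhdsWithin_mono x (fun y hy => ne_of_gt hy))
    refine ge_of_tendsto h1 ?_
    filter_upwards [self_mem_nhdsWithin] with y hy
    have hy' : x < y := hy
    rw [slope_def_field]
    apply div_nonneg
    · have := hf (le_of_lt hx) (le_of_lt (hx.trans hy')) hy'.le
      linarith
    · linarith
  · rw [deriv_zero_of_not_differentiableAt hd]

lemma Qeta_even (δJ η : ℝ) : Qeta δJ (-η) = Qeta δJ η := by
  rw [Qeta, Qeta, Keta_even, Keta_even]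

lemma deriv_Qeta_zero (δJ : ℝ) : deriv (Qeta δJ) 0 = 0 := by
  have h1 : deriv (fun x => Qeta δJ (-x)) 0 = - deriv (Qeta δJ) 0 := by
    rw [deriv_comp_neg]; norm_num
  have h2 : (fun x => Qeta δJ (-x)) = Qeta δJ := funext fun x => Qeta_even δJ x
  rw [h2] at h1
  linarith

theorem Qeta_monotone (δJ : ℝ) :
    (∀ η ∈ Set.Icc (0:ℝ) 1, 0 ≤ deriv (Qeta δJ) η) ∧
    MonotoneOn (Qeta δJ) (Set.Icc (0:ℝ) 1) ∧
    (∀ η ∈ Set.Icc (0:ℝ) 1, Qeta δJ η ≤ Qeta δJ 1) := by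
  have hm := Qeta_mono_Ici δJ
  refine ⟨?_, ?_, ?_⟩
  · intro η hη
    rcases eq_or_lt_of_le hη.1 with h | h
    · rw [← h, deriv_Qeta_zero]
    · exact deriv_nonneg_of_monoOn hm h
  · exact hm.mono (fun x hx => hx.1)
  · intro η hη
    exact hm.mono (fun x hx => hx.1) hη (Set.mem_Icc.mpr ⟨zero_le_one, le_refl 1⟩) hη.2
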